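/- arXiv:2502.02561 — 8 statements merged into one kernel-verified Lean document; each statement's English description precedes it below -/
import Mathlib

section
/- Let 𝒳 be a measurable space in which singletons are measurable, let α ∈ [0,1), let π : Finset Y → A be an arbitrary policy, and let C : 𝒳 → Finset Y be a set-valued map. Fix x₀ ∈ 𝒳 with C(x₀) nonempty and let y* ∈ C(x₀) satisfy u(π(C(x₀)), y*) = min_{y ∈ C(x₀)} u(π(C(x₀)), y). Let p be the Dirac probability measure on 𝒳 × Y concentrated at (x₀, y*). Then: (i) p{(x,y) : y ∈ C(x)} = 1, so p satisfies the marginal coverage constraint p{(x,y) : y ∈ C(x)} ≥ 1 − α; and (ii) for every measurable ν : 𝒳 → ℝ with p{(x,y) : u(π(C(x)), y) ≥ ν(x)} ≥ 1 − α, one has ∫ ν d(p_X) ≤ max_{a∈A} min_{y ∈ C(x₀)} u(a,y), where p_X is the pushforward of p under the projection (x,y) ↦ x. In words: against the worst-case distribution consistent with marginal coverage, no policy can certify more utility than the max-min value of the prediction set. -/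
open MeasureTheory

/-- Against the worst-case (Dirac) distribution consistent with marginal
coverage, no policy `π` can certify more utility than the max-min value of the prediction set. -/
theorem stmt_1
    {Y A 𝒳 : Type*} [Fintype Y] [Nonempty Y] [Fintype A] [Nonempty A]
    [MeasurableSpace Y] [MeasurableSingletonClass Y]
    [MeasurableSpace 𝒳] [MeasurableSingletonClass 𝒳]
    (u : A → Y → ℝ)
    (α : ℝ) (hα0 : 0 ≤ α) (hα1 : α < 1)
    (π : Finset Y → A)
    (C : 𝒳 → Finset Y)
    (x₀ : 𝒳) (hC : (C x₀).Nonempty)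
    (ystar : Y) (hystar : ystar ∈ C x₀)
    (hymin : u (π (C x₀)) ystar = (C x₀).inf' hC (u (π (C x₀))))
    (p : Measure (𝒳 × Y)) (hp : p = Measure.dirac (x₀, ystar)) :
    p {q : 𝒳 × Y | q.2 ∈ C q.1} = 1 ∧
    ENNReal.ofReal (1 - α) ≤ p {q : 𝒳 × Y | q.2 ∈ C q.1} ∧
    ∀ ν : 𝒳 → ℝ, Measurable ν →
      ENNReal.ofReal (1 - α) ≤ p {q : 𝒳 × Y | ν q.1 ≤ u (π (C q.1)) q.2} →
      ∫ x, ν x ∂(p.map Prod.fst) ≤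
        Finset.univ.sup' Finset.univ_nonempty (fun a => (C x₀).inf' hC (u a)) := by
  subst hp
  have hmem : ((x₀, ystar) : 𝒳 × Y) ∈ {q : 𝒳 × Y | q.2 ∈ C q.1} := hystar
  have h1 : Measure.dirac ((x₀, ystar) : 𝒳 × Y) {q : 𝒳 × Y | q.2 ∈ C q.1} = 1 :=
    Measure.dirac_apply_of_mem hmem
  refine ⟨h1, by simp [h1, hα0], ?_⟩
  intro ν hν hcov
  have hsingle : MeasurableSet ({(x₀, ystar)} : Set (𝒳 × Y)) := by
    have : ({(x₀, ystar)} : Set (𝒳 × Y)) = {x₀} ×ˢ {ystar} := by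
      ext q; simp [Prod.ext_iff]
    rw [this]
    exact (measurableSet_singleton x₀).prod (measurableSet_singleton ystar)
  have hin : ((x₀, ystar) : 𝒳 × Y) ∈ {q : 𝒳 × Y | ν q.1 ≤ u (π (C q.1)) q.2} := by
    by_contra hnot
    have hsub : {q : 𝒳 × Y | ν q.1 ≤ u (π (C q.1)) q.2} ⊆ ({(x₀, ystar)} : Set (𝒳 × Y))ᶜ := by
      intro q hq hq'
      simp only [Set.mem_singleton_iff] at hq'
      exact hnot (hq' ▸ hq)
    have hz : Measure.dirac ((x₀, ystar) : 𝒳 × Y) (({(x₀, ystar)} : Set (𝒳 × Y))ᶜ) = 0 := by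
      rw [Measure.dirac_apply' _ hsingle.compl]
      simp
    have := measure_mono_null hsub hz
    rw [this] at hcov
    have : (1 : ℝ) - α ≤ 0 := by
      simpa [ENNReal.ofReal_le_iff_le_toReal] using hcov
    linarith
  have hmap : (Measure.dirac ((x₀, ystar) : 𝒳 × Y)).map Prod.fst = Measure.dirac x₀ := by
    rw [Measure.map_dirac' measurable_fst]
  rw [hmap, integral_dirac]
  calc ν x₀ ≤ u (π (C x₀)) ystar := hin
    _ = (C x₀).inf' hC (u (π (C x₀))) := hymin
    _ ≤ Finset.univ.sup' Finset.univ_nonempty (fun a => (C x₀).inf' hC (u a)) :=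
        Finset.le_sup' (fun a => (C x₀).inf' hC (u a)) (Finset.mem_univ (π (C x₀)))
end

section
/- Let 𝒳 be a measurable space in which singletons are measurable, α ∈ (0, 1/2), and let C : 𝒳 → Finset Y satisfy: C(x) is nonempty for every x, and {x : y ∈ C(x)} is measurable for every y ∈ Y. Let Ω be the set of probability measures p on 𝒳 × Y with p{(x,y) : y ∈ C(x)} ≥ 1 − α. For a policy π : Finset Y → A and p ∈ Ω define ν*(π, p) as the supremum of ∫ ν d(p_X) over measurable ν : 𝒳 → ℝ satisfying 0 ≤ ν(x) ≤ u_max for all x and p{(x,y) : u(π(C(x)), y) ≥ ν(x)} ≥ 1 − α, where p_X is the pushforward of p under the projection (x,y) ↦ x. Then the max-min policy is minimax optimal: for every policy π : Finset Y → A, inf_{p ∈ Ω} ν*(π, p) ≤ inf_{p ∈ Ω} ν*(a_RA, p), where a_RA is the policy that maps a nonempty finite set S ⊆ Y to a max-min action a_RA(S). -/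
open MeasureTheory

/-- The max-min policy is minimax optimal over the set `Ω` of distributions
consistent with the marginal coverage guarantee of the prediction sets `C`. -/
theorem stmt_2
    {Y A 𝒳 : Type*} [Fintype Y] [Nonempty Y] [Fintype A] [Nonempty A]
    [MeasurableSpace Y] [MeasurableSingletonClass Y]
    [MeasurableSpace 𝒳] [MeasurableSingletonClass 𝒳]
    (u : A → Y → ℝ) (hu : ∀ a y, 0 ≤ u a y)
    (umax : ℝ)
    (humax : umax = Finset.univ.sup' Finset.univ_nonempty
      (fun a => Finset.univ.sup' Finset.univ_nonempty (fun y => u a y)))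
    (α : ℝ) (hα0 : 0 < α) (hα1 : α < 1 / 2)
    (C : 𝒳 → Finset Y) (hCne : ∀ x, (C x).Nonempty)
    (hCmeas : ∀ y : Y, MeasurableSet {x : 𝒳 | y ∈ C x})
    (aRA : Finset Y → A)
    (haRA : ∀ (S : Finset Y) (hS : S.Nonempty),
      S.inf' hS (u (aRA S)) =
        Finset.univ.sup' Finset.univ_nonempty (fun a => S.inf' hS (u a)))
    (Ωset : Set (Measure (𝒳 × Y)))
    (hΩ : Ωset = {p | IsProbabilityMeasure p ∧
      ENNReal.ofReal (1 - α) ≤ p {q : 𝒳 × Y | q.2 ∈ C q.1}})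
    (νstar : (Finset Y → A) → Measure (𝒳 × Y) → ℝ)
    (hνstar : ∀ (π : Finset Y → A) (p : Measure (𝒳 × Y)),
      νstar π p = sSup {v : ℝ | ∃ ν : 𝒳 → ℝ, Measurable ν ∧
        (∀ x, 0 ≤ ν x ∧ ν x ≤ umax) ∧
        ENNReal.ofReal (1 - α) ≤ p {q : 𝒳 × Y | ν q.1 ≤ u (π (C q.1)) q.2} ∧
        v = ∫ x, ν x ∂(p.map Prod.fst)}) :
    ∀ π : Finset Y → A, ⨅ p : Ωset, νstar π ↑p ≤ ⨅ p : Ωset, νstar aRA ↑p := by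
  intro π
  have humax' : ∀ a y, u a y ≤ umax := by
    intro a y
    rw [humax]
    exact le_trans (Finset.le_sup' (fun y => u a y) (Finset.mem_univ y))
      (Finset.le_sup' (fun a => Finset.univ.sup' Finset.univ_nonempty (fun y => u a y))
        (Finset.mem_univ a))
  by_cases hX : Nonempty 𝒳
  · -- main case
    -- the "max-min value" function on prediction sets
    set G : Finset Y → ℝ := fun S => if h : S.Nonempty then S.inf' h (u (aRA S)) else 0 with hG
    have hGC : ∀ x, G (C x) = (C x).inf' (hCne x) (u (aRA (C x))) := by
      intro x; simp only [hG, dif_pos (hCne x)]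
    -- choose x₀ minimizing G (C x)
    obtain ⟨S₀, hS₀mem, hmin⟩ := Set.exists_min_image (Set.range C) G
      (Set.toFinite _) (Set.range_nonempty C)
    obtain ⟨x₀, hx₀⟩ := hS₀mem
    set c : ℝ := G (C x₀) with hc
    have hcx : ∀ x, c ≤ G (C x) := by
      intro x
      rw [hc, hx₀]
      exact hmin (C x) ⟨x, rfl⟩
    have hc0 : 0 ≤ c := by
      rw [hc, hGC]
      exact Finset.le_inf' _ _ (fun y _ => hu _ y)
    have hcumax : c ≤ umax := by
      rw [hc, hGC]
      obtain ⟨y, hy⟩ := hCne x₀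
      exact le_trans (Finset.inf'_le _ hy) (humax' _ y)
    -- choose y₀ ∈ C x₀ minimizing u (π (C x₀))
    obtain ⟨y₀, hy₀mem, hy₀min⟩ := Finset.exists_min_image (C x₀) (u (π (C x₀))) (hCne x₀)
    have hy₀c : u (π (C x₀)) y₀ ≤ c := by
      have h1 : u (π (C x₀)) y₀ ≤ (C x₀).inf' (hCne x₀) (u (π (C x₀))) :=
        Finset.le_inf' _ _ (fun y hy => hy₀min y hy)
      have h2 : (C x₀).inf' (hCne x₀) (u (π (C x₀))) ≤
          Finset.univ.sup' Finset.univ_nonempty (fun a => (C x₀).inf' (hCne x₀) (u a)) :=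
        Finset.le_sup' (fun a => (C x₀).inf' (hCne x₀) (u a)) (Finset.mem_univ (π (C x₀)))
      rw [hc, hGC, haRA (C x₀) (hCne x₀)]
      exact le_trans h1 h2
    -- the adversarial point mass
    set p₀ : Measure (𝒳 × Y) := Measure.dirac (x₀, y₀) with hp₀
    have hp₀mem : p₀ ∈ Ωset := by
      rw [hΩ]
      refine ⟨by infer_instance, ?_⟩
      have : p₀ {q : 𝒳 × Y | q.2 ∈ C q.1} = 1 :=
        Measure.dirac_apply_of_mem (by simpa using hy₀mem)
      rw [this]
      exact ENNReal.ofReal_le_one.mpr (by linarith)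
    haveI : Nonempty Ωset := ⟨⟨p₀, hp₀mem⟩⟩
    have hofReal_pos : (0 : ENNReal) < ENNReal.ofReal (1 - α) :=
      ENNReal.ofReal_pos.mpr (by linarith)
    -- every νstar value is nonneg
    have hnonneg : ∀ (π' : Finset Y → A) (p : Measure (𝒳 × Y)), 0 ≤ νstar π' p := by
      intro π' p
      rw [hνstar]
      apply Real.sSup_nonneg
      rintro v ⟨ν, hνm, hνb, hνcov, rfl⟩
      exact integral_nonneg (fun x => (hνb x).1)
    -- the point mass gives νstar π p₀ ≤ c
    have hkey : νstar π p₀ ≤ c := by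
      rw [hνstar]
      apply Real.sSup_le _ hc0
      rintro v ⟨ν, hνm, hνb, hνcov, rfl⟩
      have hmem : (x₀, y₀) ∈ {q : 𝒳 × Y | ν q.1 ≤ u (π (C q.1)) q.2} := by
        by_contra hnot
        have hsub : {q : 𝒳 × Y | ν q.1 ≤ u (π (C q.1)) q.2} ⊆ ({(x₀, y₀)} : Set (𝒳 × Y))ᶜ := by
          intro q hq
          simp only [Set.mem_compl_iff, Set.mem_singleton_iff]
          rintro rfl
          exact hnot hq
        have h0 : p₀ ({(x₀, y₀)} : Set (𝒳 × Y))ᶜ = 0 := by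
          rw [hp₀, Measure.dirac_apply' _ (MeasurableSet.singleton _).compl]
          simp
        have := le_trans hνcov (le_trans (measure_mono hsub) h0.le)
        exact absurd this (by simpa using hofReal_pos.ne')
      have hνx₀ : ν x₀ ≤ c := le_trans hmem hy₀c
      have hmap : p₀.map Prod.fst = Measure.dirac x₀ := by
        rw [hp₀, Measure.map_dirac' measurable_fst]
      rw [hmap, integral_dirac]
      exact hνx₀
    -- for every p ∈ Ωset, the constant c is feasible for aRA, so c ≤ νstar aRA p
    have hlower : ∀ p ∈ Ωset, c ≤ νstar aRA p := by
      intro p hp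
      rw [hΩ] at hp
      obtain ⟨hp1, hp2⟩ := hp
      haveI := hp1
      haveI : IsProbabilityMeasure (p.map Prod.fst) :=
        Measure.isProbabilityMeasure_map measurable_fst.aemeasurable
      rw [hνstar]
      have hbdd : BddAbove {v : ℝ | ∃ ν : 𝒳 → ℝ, Measurable ν ∧
          (∀ x, 0 ≤ ν x ∧ ν x ≤ umax) ∧
          ENNReal.ofReal (1 - α) ≤ p {q : 𝒳 × Y | ν q.1 ≤ u (aRA (C q.1)) q.2} ∧
          v = ∫ x, ν x ∂(p.map Prod.fst)} := by
        refine ⟨umax, ?_⟩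
        rintro v ⟨ν, hνm, hνb, hνcov, rfl⟩
        calc ∫ x, ν x ∂(p.map Prod.fst)
            ≤ ∫ _, umax ∂(p.map Prod.fst) :=
              integral_mono_of_nonneg (Filter.Eventually.of_forall (fun x => (hνb x).1))
                (integrable_const umax) (Filter.Eventually.of_forall (fun x => (hνb x).2))
          _ = umax := by simp
      apply le_csSup hbdd
      refine ⟨fun _ => c, measurable_const, fun x => ⟨hc0, hcumax⟩, ?_, by simp⟩
      refine le_trans hp2 (measure_mono ?_)
      rintro ⟨x, y⟩ hy
      simp only [Set.mem_setOf_eq] at hy ⊢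
      calc c ≤ G (C x) := hcx x
        _ ≤ u (aRA (C x)) y := by rw [hGC]; exact Finset.inf'_le _ hy
    -- conclude
    have hbddBelow : BddBelow (Set.range fun p : Ωset => νstar π ↑p) := by
      refine ⟨0, ?_⟩
      rintro v ⟨p, rfl⟩
      exact hnonneg π _
    calc ⨅ p : Ωset, νstar π ↑p ≤ νstar π ↑(⟨p₀, hp₀mem⟩ : Ωset) := ciInf_le hbddBelow _
      _ ≤ c := hkey
      _ ≤ ⨅ p : Ωset, νstar aRA ↑p := le_ciInf (fun p => hlower p p.2)
  · -- 𝒳 empty : Ωset is empty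
    haveI : IsEmpty 𝒳 := not_nonempty_iff.mp hX
    haveI : IsEmpty Ωset := by
      constructor
      rintro ⟨p, hp⟩
      rw [hΩ] at hp
      obtain ⟨hp1, -⟩ := hp
      have h1 : p Set.univ = 1 := hp1.measure_univ
      have h2 : (Set.univ : Set (𝒳 × Y)) = ∅ := Set.eq_empty_of_isEmpty _
      rw [h2, measure_empty] at h1
      exact zero_ne_one h1
    rw [Real.iInf_of_isEmpty, Real.iInf_of_isEmpty]
end

section
/- Let 𝒳 be a measurable space, μ a probability measure on 𝒳 × Y, α ∈ [0,1], and let μ_X denote the pushforward of μ under the projection (x,y) ↦ x. Define V_DPO as the supremum of ∫ ν dμ_X over all pairs of a measurable action policy a : 𝒳 → A and a measurable utility certificate ν : 𝒳 → ℝ with ν(x) ≤ u_max for all x and μ{(x,y) : u(a(x), y) ≥ ν(x)} ≥ 1 − α. Define V_CPO as the supremum of ∫ ν_RA(C(x)) dμ_X over all set-valued maps C : 𝒳 → Finset Y such that C(x) is nonempty for all x, {x : y ∈ C(x)} is measurable for every y ∈ Y, and μ{(x,y) : y ∈ C(x)} ≥ 1 − α. Then V_DPO = V_CPO: risk-averse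 decision policy optimization and risk-averse conformal prediction optimization have the same optimal value. -/
open MeasureTheory

/-- A map into `Finset Y` whose membership sections are measurable has measurable fibers. -/
lemma finsetMap_fiber_measurable {𝒳 Y : Type*} [Fintype Y] [MeasurableSpace 𝒳]
    (C : 𝒳 → Finset Y) (h : ∀ y : Y, MeasurableSet {x : 𝒳 | y ∈ C x}) (S : Finset Y) :
    MeasurableSet {x : 𝒳 | C x = S} := by
  classical
  have hEq : {x : 𝒳 | C x = S}
      = ⋂ y : Y, (if y ∈ S then {x : 𝒳 | y ∈ C x} else {x : 𝒳 | y ∈ C x}ᶜ) := by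
    ext x
    simp only [Set.mem_iInter, Set.mem_setOf_eq]
    constructor
    · rintro rfl y
      by_cases hy : y ∈ C x <;> simp [hy]
    · intro hy
      ext y
      specialize hy y
      by_cases hyS : y ∈ S <;> simp [hyS] at hy ⊢ <;> tauto
  rw [hEq]
  exact MeasurableSet.iInter fun y => by
    by_cases hyS : y ∈ S
    · simpa [hyS] using h y
    · simpa [hyS] using (h y).compl

/-- Risk-averse decision policy optimization (RA-DPO) and risk-averse
conformal prediction optimization (RA-CPO) have the same optimal value. -/
theorem stmt_3
    {Y A 𝒳 : Type*} [Fintype Y] [Nonempty Y] [Fintype A] [Nonempty A]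
    [MeasurableSpace Y] [MeasurableSingletonClass Y]
    [MeasurableSpace A] [MeasurableSingletonClass A]
    [MeasurableSpace 𝒳]
    (u : A → Y → ℝ) (hu : ∀ a y, 0 ≤ u a y)
    (umax : ℝ)
    (humax : umax = Finset.univ.sup' Finset.univ_nonempty
      (fun a => Finset.univ.sup' Finset.univ_nonempty (fun y => u a y)))
    (νRA : Finset Y → ℝ)
    (hνRA : ∀ (S : Finset Y) (hS : S.Nonempty),
      νRA S = Finset.univ.sup' Finset.univ_nonempty (fun a => S.inf' hS (u a)))
    (μ : Measure (𝒳 × Y)) [IsProbabilityMeasure μ]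
    (α : ℝ) (hα0 : 0 ≤ α) (hα1 : α ≤ 1) :
    sSup {v : ℝ | ∃ a : 𝒳 → A, ∃ ν : 𝒳 → ℝ, Measurable a ∧ Measurable ν ∧
        (∀ x, ν x ≤ umax) ∧
        ENNReal.ofReal (1 - α) ≤ μ {q : 𝒳 × Y | ν q.1 ≤ u (a q.1) q.2} ∧
        v = ∫ x, ν x ∂(μ.map Prod.fst)} =
    sSup {v : ℝ | ∃ C : 𝒳 → Finset Y, (∀ x, (C x).Nonempty) ∧
        (∀ y : Y, MeasurableSet {x : 𝒳 | y ∈ C x}) ∧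
        ENNReal.ofReal (1 - α) ≤ μ {q : 𝒳 × Y | q.2 ∈ C q.1} ∧
        v = ∫ x, νRA (C x) ∂(μ.map Prod.fst)} := by
  classical
  obtain ⟨a₀⟩ := ‹Nonempty A›
  obtain ⟨y₀⟩ := ‹Nonempty Y›
  set μX : Measure 𝒳 := μ.map Prod.fst with hμX
  haveI : IsProbabilityMeasure μX :=
    Measure.isProbabilityMeasure_map measurable_fst.aemeasurable
  letI : MeasurableSpace (Finset Y) := ⊤
  haveI : MeasurableSingletonClass (Finset Y) := ⟨fun _ => trivial⟩
  -- basic bounds on u and νRA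
  have hule : ∀ a y, u a y ≤ umax := by
    intro a y
    rw [humax]
    exact le_trans (Finset.le_sup' (fun y => u a y) (Finset.mem_univ y))
      (Finset.le_sup' (fun a => Finset.univ.sup' Finset.univ_nonempty (fun y => u a y))
        (Finset.mem_univ a))
  have humax0 : (0 : ℝ) ≤ umax := le_trans (hu a₀ y₀) (hule a₀ y₀)
  have hν0 : ∀ (S : Finset Y) (hS : S.Nonempty), 0 ≤ νRA S := by
    intro S hS
    rw [hνRA S hS]
    refine le_trans (Finset.le_inf' hS (u a₀) fun y _ => hu a₀ y) ?_
    exact Finset.le_sup' (fun a => S.inf' hS (u a)) (Finset.mem_univ a₀)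
  have hνle : ∀ (S : Finset Y) (hS : S.Nonempty), νRA S ≤ umax := by
    intro S hS
    rw [hνRA S hS]
    refine Finset.sup'_le _ _ fun a _ => ?_
    obtain ⟨y, hy⟩ := hS
    exact le_trans (Finset.inf'_le (u a) hy) (hule a y)
  -- argmax choice
  have hargmax : ∀ S : Finset Y, ∃ a' : A, ∀ y ∈ S, νRA S ≤ u a' y := by
    intro S
    by_cases hS : S.Nonempty
    · obtain ⟨a', _, ha'⟩ :=
        Finset.exists_mem_eq_sup' (Finset.univ_nonempty (α := A))
          (fun a => S.inf' hS (u a))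
      refine ⟨a', fun y hy => ?_⟩
      rw [hνRA S hS, ha']
      exact Finset.inf'_le (u a') hy
    · exact ⟨a₀, fun y hy => absurd ⟨y, hy⟩ hS⟩
  -- maximizer of u
  obtain ⟨aU, _, haU⟩ :=
    Finset.exists_mem_eq_sup' (Finset.univ_nonempty (α := A))
      (fun a => Finset.univ.sup' Finset.univ_nonempty (fun y => u a y))
  obtain ⟨yU, _, hyU⟩ :=
    Finset.exists_mem_eq_sup' (Finset.univ_nonempty (α := Y)) (fun y => u aU y)
  have hUmax : u aU yU = umax := by rw [humax, haU, hyU]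
  set S1 : Set ℝ := {v : ℝ | ∃ a : 𝒳 → A, ∃ ν : 𝒳 → ℝ, Measurable a ∧ Measurable ν ∧
        (∀ x, ν x ≤ umax) ∧
        ENNReal.ofReal (1 - α) ≤ μ {q : 𝒳 × Y | ν q.1 ≤ u (a q.1) q.2} ∧
        v = ∫ x, ν x ∂μX} with hS1
  set S2 : Set ℝ := {v : ℝ | ∃ C : 𝒳 → Finset Y, (∀ x, (C x).Nonempty) ∧
        (∀ y : Y, MeasurableSet {x : 𝒳 | y ∈ C x}) ∧
        ENNReal.ofReal (1 - α) ≤ μ {q : 𝒳 × Y | q.2 ∈ C q.1} ∧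
        v = ∫ x, νRA (C x) ∂μX} with hS2
  have hofReal1 : ENNReal.ofReal (1 - α) ≤ 1 := by
    rw [show (1 : ENNReal) = ENNReal.ofReal 1 by simp]
    exact ENNReal.ofReal_le_ofReal (by linarith)
  have hS1ne : S1.Nonempty := by
    refine ⟨0, fun _ => a₀, fun _ => 0, measurable_const, measurable_const,
      fun _ => humax0, ?_, by simp⟩
    have : {q : 𝒳 × Y | (0 : ℝ) ≤ u a₀ q.2} = Set.univ := by
      ext q; simp [hu]
    rw [this, measure_univ]
    exact hofReal1
  have hS2ne : S2.Nonempty := by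
    refine ⟨νRA Finset.univ, fun _ => Finset.univ, fun _ => Finset.univ_nonempty,
      fun y => by simp, ?_, by simp⟩
    have : {q : 𝒳 × Y | q.2 ∈ (Finset.univ : Finset Y)} = Set.univ := by
      ext q; simp
    rw [this, measure_univ]
    exact hofReal1
  -- integrability helper
  have hintble : ∀ g : 𝒳 → ℝ, Measurable g → (∀ x, 0 ≤ g x) → (∀ x, g x ≤ umax) →
      Integrable g μX := by
    intro g hg h0 h1
    refine ⟨hg.aestronglyMeasurable, ?_⟩
    refine MeasureTheory.HasFiniteIntegral.of_bounded (C := umax) ?_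
    filter_upwards with x
    rw [Real.norm_eq_abs, abs_of_nonneg (h0 x)]
    exact h1 x
  have hbound : ∀ ν : 𝒳 → ℝ, (∀ x, ν x ≤ umax) → ∫ x, ν x ∂μX ≤ umax := by
    intro ν hb
    by_cases hi : Integrable ν μX
    · calc ∫ x, ν x ∂μX ≤ ∫ _, umax ∂μX :=
            integral_mono hi (integrable_const _) hb
        _ = umax := by simp
    · rw [integral_undef hi]; exact humax0
  have hS1bdd : BddAbove S1 := by
    refine ⟨umax, fun v hv => ?_⟩
    obtain ⟨a, ν, _, _, hb, _, rfl⟩ := hv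
    exact hbound ν hb
  have hS2bdd : BddAbove S2 := by
    refine ⟨umax, fun v hv => ?_⟩
    obtain ⟨C, hne, _, _, rfl⟩ := hv
    exact hbound _ (fun x => hνle _ (hne x))
  -- Transfer 2 : S2 → S1 (every CPO value is a DPO value)
  have key2 : ∀ v ∈ S2, v ∈ S1 := by
    intro v hv
    obtain ⟨C, hne, hCm, hCμ, rfl⟩ := hv
    have hCmeas : Measurable C :=
      measurable_to_countable' fun S => finsetMap_fiber_measurable C hCm S
    set fch : Finset Y → A := fun S => Classical.choose (hargmax S) with hfch
    refine ⟨fun x => fch (C x), fun x => νRA (C x),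
      (measurable_from_top (f := fch)).comp hCmeas,
      (measurable_from_top (f := νRA)).comp hCmeas,
      fun x => hνle _ (hne x), ?_, rfl⟩
    refine le_trans hCμ (measure_mono ?_)
    intro q hq
    exact Classical.choose_spec (hargmax (C q.1)) q.2 hq
  -- Transfer 1 : S1 → S2 (every DPO value is dominated by a CPO value)
  have key1 : ∀ v ∈ S1, ∃ w ∈ S2, v ≤ w := by
    intro v hv
    obtain ⟨a, ν, hma, hmν, hb, hμa, rfl⟩ := hv
    set P : 𝒳 → Prop := fun x => ∃ y : Y, ν x ≤ u (a x) y with hP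
    set C : 𝒳 → Finset Y := fun x =>
      if P x then Finset.univ.filter (fun y => ν x ≤ u (a x) y) else {yU} with hC
    have hmuy : ∀ y : Y, Measurable fun x => u (a x) y := fun y =>
      (Measurable.of_discrete (f := fun a' => u a' y)).comp hma
    have hPmeas : MeasurableSet {x | P x} := by
      have : {x | P x} = ⋃ y : Y, {x | ν x ≤ u (a x) y} := by
        ext x; simp [hP]
      rw [this]
      exact MeasurableSet.iUnion fun y => measurableSet_le hmν (hmuy y)
    have hCm : ∀ y : Y, MeasurableSet {x : 𝒳 | y ∈ C x} := by
      intro y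
      have : {x : 𝒳 | y ∈ C x}
          = ({x | P x} ∩ {x | ν x ≤ u (a x) y}) ∪ ({x | P x}ᶜ ∩ {x : 𝒳 | y = yU}) := by
        ext x
        by_cases hx : P x <;>
          simp [hC, hx, Finset.mem_filter, Finset.mem_singleton]
      rw [this]
      exact ((hPmeas.inter (measurableSet_le hmν (hmuy y))).union
        (hPmeas.compl.inter (MeasurableSet.const _)))
    have hCne : ∀ x, (C x).Nonempty := by
      intro x
      by_cases hx : P x
      · obtain ⟨y, hy⟩ := id hx
        exact ⟨y, by simp [hC, hx, Finset.mem_filter, hy]⟩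
      · exact ⟨yU, by simp [hC, hx]⟩
    have hCmeasb : Measurable C :=
      measurable_to_countable' fun S => finsetMap_fiber_measurable C hCm S
    have hmg : Measurable fun x => νRA (C x) :=
      (measurable_from_top (f := νRA)).comp hCmeasb
    have hptw : ∀ x, ν x ≤ νRA (C x) := by
      intro x
      by_cases hx : P x
      · have hCx : C x = Finset.univ.filter (fun y => ν x ≤ u (a x) y) := by
          simp [hC, hx]
        have hne' : (C x).Nonempty := hCne x
        rw [hνRA (C x) hne']
        refine le_trans ?_
          (Finset.le_sup' (fun a' => (C x).inf' hne' (u a')) (Finset.mem_univ (a x)))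
        refine Finset.le_inf' hne' _ fun y hy => ?_
        rw [hCx] at hy
        exact (Finset.mem_filter.mp hy).2
      · have hCx : C x = {yU} := by simp [hC, hx]
        have hne' : (C x).Nonempty := hCne x
        rw [hνRA (C x) hne']
        refine le_trans (le_trans (hb x) ?_)
          (Finset.le_sup' (fun a' => (C x).inf' hne' (u a')) (Finset.mem_univ aU))
        rw [show (C x).inf' hne' (u aU) = u aU yU by
          simp [hCx]]
        exact hUmax.ge
    have hgint : Integrable (fun x => νRA (C x)) μX :=
      hintble _ hmg (fun x => hν0 _ (hCne x)) (fun x => hνle _ (hCne x))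
    refine ⟨∫ x, νRA (C x) ∂μX, ⟨C, hCne, hCm, ?_, rfl⟩, ?_⟩
    · refine le_trans hμa (measure_mono ?_)
      intro q hq
      have hPq : P q.1 := ⟨q.2, hq⟩
      show q.2 ∈ C q.1
      simp [hC, hPq, Finset.mem_filter]
      exact hq
    · by_cases hi : Integrable ν μX
      · exact integral_mono hi hgint hptw
      · rw [integral_undef hi]
        exact integral_nonneg fun x => hν0 _ (hCne x)
  refine le_antisymm ?_ ?_
  · refine csSup_le hS1ne fun v hv => ?_
    obtain ⟨w, hw, hvw⟩ := key1 v hv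
    exact le_trans hvw (le_csSup hS2bdd hw)
  · exact csSup_le hS2ne fun v hv => le_csSup hS1bdd (key2 v hv)
end

section
/- Let 𝒳 be a measurable space, μ a probability measure on 𝒳 × Y, α ∈ [0,1], a : 𝒳 → A a measurable action policy, and ν : 𝒳 → ℝ a measurable function with ν(x) ≤ u_max for all x and μ{(x,y) : u(a(x), y) ≥ ν(x)} ≥ 1 − α. Fix (a_max, y_max) with u(a_max, y_max) = u_max, and define C̃ : 𝒳 → Finset Y by C̃(x) = {y : u(a(x), y) ≥ ν(x)} if this set is nonempty, and C̃(x) = {y_max} otherwise. Then: (i) {x : y ∈ C̃(x)} is measurable for every y ∈ Y; (ii) μ{(x,y) : y ∈ C̃(x)} ≥ 1 − α; and (iii) ∫ ν_RA(C̃(x)) dμ_X ≥ ∫ ν dμ_X, where μ_X is the pushforward of μ under the projection (x,y) ↦ x. That is, from any feasible risk-averse decision policy and utility certificate one can construct a marginally valid prediction-set map whose expected max-min value is at least the expected certified utility. -/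
open MeasureTheory

/-- From any feasible risk-averse action policy `a` and utility certificate
`ν` one can construct a marginally valid prediction-set map `C̃` (taking the labels whose
utility under `a x` is at least `ν x`, augmented with a maximal-utility label when this set is
empty) whose expected max-min value is at least the expected certified utility. -/
theorem stmt_4
    {Y A 𝒳 : Type*} [Fintype Y] [Nonempty Y] [Fintype A] [Nonempty A]
    [MeasurableSpace Y] [MeasurableSingletonClass Y]
    [MeasurableSpace A] [MeasurableSingletonClass A]
    [MeasurableSpace 𝒳]
    (u : A → Y → ℝ) (hu : ∀ a y, 0 ≤ u a y)
    (umax : ℝ)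
    (humax : umax = Finset.univ.sup' Finset.univ_nonempty
      (fun a => Finset.univ.sup' Finset.univ_nonempty (fun y => u a y)))
    (νRA : Finset Y → ℝ)
    (hνRA : ∀ (S : Finset Y) (hS : S.Nonempty),
      νRA S = Finset.univ.sup' Finset.univ_nonempty (fun a => S.inf' hS (u a)))
    (μ : Measure (𝒳 × Y)) [IsProbabilityMeasure μ]
    (α : ℝ) (hα0 : 0 ≤ α) (hα1 : α ≤ 1)
    (a : 𝒳 → A) (ha : Measurable a)
    (ν : 𝒳 → ℝ) (hν : Measurable ν) (hνle : ∀ x, ν x ≤ umax)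
    (hfeas : ENNReal.ofReal (1 - α) ≤ μ {q : 𝒳 × Y | ν q.1 ≤ u (a q.1) q.2})
    (amax : A) (ymax : Y) (humax' : u amax ymax = umax)
    (Ctil : 𝒳 → Finset Y)
    (hCtil : ∀ x : 𝒳, (∃ y : Y, ν x ≤ u (a x) y) →
      ∀ y : Y, (y ∈ Ctil x ↔ ν x ≤ u (a x) y))
    (hCtil' : ∀ x : 𝒳, (¬ ∃ y : Y, ν x ≤ u (a x) y) → Ctil x = {ymax}) :
    (∀ y : Y, MeasurableSet {x : 𝒳 | y ∈ Ctil x}) ∧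
    ENNReal.ofReal (1 - α) ≤ μ {q : 𝒳 × Y | q.2 ∈ Ctil q.1} ∧
    ∫ x, ν x ∂(μ.map Prod.fst) ≤ ∫ x, νRA (Ctil x) ∂(μ.map Prod.fst) := by
  classical
  -- measurability of basic level sets
  have hBy : ∀ y : Y, MeasurableSet {x : 𝒳 | ν x ≤ u (a x) y} := by
    intro y
    exact measurableSet_le hν ((measurable_of_countable (fun b => u b y)).comp ha)
  have hE : MeasurableSet {x : 𝒳 | ∃ y : Y, ν x ≤ u (a x) y} := by
    have : {x : 𝒳 | ∃ y : Y, ν x ≤ u (a x) y} = ⋃ y : Y, {x : 𝒳 | ν x ≤ u (a x) y} := by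
      ext x; simp
    rw [this]
    exact MeasurableSet.iUnion fun y => hBy y
  -- part (i)
  have part1 : ∀ y : Y, MeasurableSet {x : 𝒳 | y ∈ Ctil x} := by
    intro y
    have hset : {x : 𝒳 | y ∈ Ctil x} =
        ({x : 𝒳 | ∃ y' : Y, ν x ≤ u (a x) y'} ∩ {x : 𝒳 | ν x ≤ u (a x) y}) ∪
        ({x : 𝒳 | ∃ y' : Y, ν x ≤ u (a x) y'}ᶜ ∩ {x : 𝒳 | y = ymax}) := by
      ext x
      by_cases h : ∃ y' : Y, ν x ≤ u (a x) y'
      · simp only [Set.mem_setOf_eq, Set.mem_union, Set.mem_inter_iff, Set.mem_compl_iff, h,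
          not_true, false_and, or_false, true_and]
        exact hCtil x h y
      · simp only [Set.mem_setOf_eq, Set.mem_union, Set.mem_inter_iff, Set.mem_compl_iff, h,
          not_false_iff, false_and, false_or, true_and, hCtil' x h, Finset.mem_singleton]
    rw [hset]
    have hconst : MeasurableSet {x : 𝒳 | y = ymax} := by
      by_cases h : y = ymax <;> simp [h]
    exact ((hE.inter (hBy y)).union (hE.compl.inter hconst))
  -- part (ii)
  have part2 : ENNReal.ofReal (1 - α) ≤ μ {q : 𝒳 × Y | q.2 ∈ Ctil q.1} := by
    refine hfeas.trans (measure_mono ?_)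
    intro q hq
    exact (hCtil q.1 ⟨q.2, hq⟩ q.2).mpr hq
  refine ⟨part1, part2, ?_⟩
  -- nonemptiness of Ctil
  have hne : ∀ x : 𝒳, (Ctil x).Nonempty := by
    intro x
    by_cases h : ∃ y : Y, ν x ≤ u (a x) y
    · obtain ⟨y0, hy0⟩ := h
      exact ⟨y0, (hCtil x ⟨y0, hy0⟩ y0).mpr hy0⟩
    · rw [hCtil' x h]; exact ⟨ymax, Finset.mem_singleton_self ymax⟩
  -- pointwise bounds
  have hbound : ∀ (S : Finset Y) (hS : S.Nonempty), 0 ≤ νRA S ∧ νRA S ≤ umax := by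
    intro S hS
    rw [hνRA S hS]
    constructor
    · refine le_trans ?_ (Finset.le_sup' _ (Finset.mem_univ amax))
      exact Finset.le_inf' hS _ (fun y _ => hu amax y)
    · rw [humax]
      refine Finset.sup'_le _ _ (fun b _ => ?_)
      obtain ⟨y0, hy0⟩ := hS
      refine le_trans (Finset.inf'_le _ hy0) ?_
      exact le_trans (Finset.le_sup' (fun y => u b y) (Finset.mem_univ y0))
        (Finset.le_sup' (fun a => Finset.univ.sup' Finset.univ_nonempty (fun y => u a y))
          (Finset.mem_univ b))
  have hpt : ∀ x : 𝒳, ν x ≤ νRA (Ctil x) := by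
    intro x
    by_cases h : ∃ y : Y, ν x ≤ u (a x) y
    · have hS : (Ctil x).Nonempty := hne x
      rw [hνRA _ hS]
      refine le_trans ?_ (Finset.le_sup' _ (Finset.mem_univ (a x)))
      exact Finset.le_inf' hS _ (fun y hy => (hCtil x h y).mp hy)
    · have hS : (Ctil x).Nonempty := hne x
      rw [hνRA _ hS]
      refine le_trans (hνle x) ?_
      refine le_trans ?_ (Finset.le_sup' _ (Finset.mem_univ amax))
      refine Finset.le_inf' hS _ (fun y hy => ?_)
      rw [hCtil' x h, Finset.mem_singleton] at hy
      rw [hy, humax']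
  -- measurability of x ↦ νRA (Ctil x)
  have hCS : ∀ S : Finset Y, MeasurableSet {x : 𝒳 | Ctil x = S} := by
    intro S
    have : {x : 𝒳 | Ctil x = S} =
        ⋂ y : Y, (if y ∈ S then {x : 𝒳 | y ∈ Ctil x} else {x : 𝒳 | y ∈ Ctil x}ᶜ) := by
      ext x
      simp only [Set.mem_setOf_eq, Set.mem_iInter]
      constructor
      · intro h y
        by_cases hy : y ∈ S <;> simp [hy, h, Set.mem_setOf_eq]
      · intro h
        ext y
        have := h y
        by_cases hy : y ∈ S <;> simp [hy] at this <;> simp [hy, this]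
    rw [this]
    refine MeasurableSet.iInter (fun y => ?_)
    by_cases hy : y ∈ S <;> simp [hy, part1 y, (part1 y).compl]
  have hgeq : (fun x => νRA (Ctil x)) =
      fun x => ∑ S : Finset Y, if Ctil x = S then νRA S else 0 := by
    funext x
    rw [Finset.sum_ite_eq (Finset.univ) (Ctil x) νRA]
    simp
  have hgmeas : Measurable (fun x => νRA (Ctil x)) := by
    rw [hgeq]
    refine Finset.measurable_sum _ (fun S _ => ?_)
    exact Measurable.ite (hCS S) measurable_const measurable_const
  -- integrability of νRA ∘ Ctil
  have hμX : IsProbabilityMeasure (μ.map Prod.fst) :=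
    Measure.isProbabilityMeasure_map measurable_fst.aemeasurable
  have humax0 : 0 ≤ umax := humax' ▸ hu amax ymax
  have hgint : Integrable (fun x => νRA (Ctil x)) (μ.map Prod.fst) := by
    refine (integrable_const umax).mono' hgmeas.aestronglyMeasurable (ae_of_all _ fun x => ?_)
    have := hbound (Ctil x) (hne x)
    rw [Real.norm_eq_abs, abs_le]
    exact ⟨le_trans (by linarith) this.1, this.2⟩
  by_cases hνint : Integrable ν (μ.map Prod.fst)
  · exact integral_mono hνint hgint hpt
  · rw [integral_undef hνint]
    exact integral_nonneg fun x => (hbound (Ctil x) (hne x)).1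
end

section
/- Let ρ be a probability measure on Y, let t ∈ [0,1), and let C ⊆ Y be a nonempty set with ρ(C) > t. Then max_{a∈A} min_{y∈C} u(a,y) ≤ θ_ρ(t). In words: no prediction set whose conditional coverage exceeds t can have max-min value larger than the best (1−t)-quantile utility θ_ρ(t). -/
/-! If `z` lies below `min_C f`, the event `{f ≤ z}` misses `C`, so its mass is at most
`1 - ρ C < α`; hence every `z` admissible in the infimum defining the `α`-quantile is at least
`min_C f`. Maximising over actions gives the theorem. -/

open MeasureTheory

/-- The `α`-quantile of `f` under `ρ`: `inf {z | ρ{y : f y ≤ z} ≥ α}`. -/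
noncomputable def quantileRA {Y : Type*} [Fintype Y] [MeasurableSpace Y]
    (ρ : Measure Y) (f : Y → ℝ) (α : ℝ) : ℝ :=
  sInf {z : ℝ | ENNReal.ofReal α ≤ ρ {y | f y ≤ z}}

section Quantile

variable {Y : Type*} [MeasurableSpace Y] {ρ : Measure Y} [IsProbabilityMeasure ρ]

lemma measure_add_measure_le_one_of_disjoint {S T : Set Y} (hST : Disjoint S T)
    (hT : MeasurableSet T) : ρ S + ρ T ≤ 1 :=
  measure_union hST hT ▸ prob_le_one

lemma quantileRA_set_nonempty [Finite Y] (f : Y → ℝ) {α : ℝ} (hα : α ≤ 1) :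
    {z : ℝ | ENNReal.ofReal α ≤ ρ {y | f y ≤ z}}.Nonempty := by
  obtain ⟨M, hM⟩ := (Set.finite_range f).bddAbove
  refine ⟨M, ?_⟩
  have hall : {y | f y ≤ M} = Set.univ :=
    Set.eq_univ_of_forall fun y => hM (Set.mem_range_self y)
  simpa [hall] using hα

lemma inf'_le_quantileRA [Fintype Y] [MeasurableSingletonClass Y] (f : Y → ℝ) {α : ℝ}
    (hα : α ≤ 1) {C : Finset Y} (hC : C.Nonempty) (hcov : 1 < ENNReal.ofReal α + ρ C) :
    C.inf' hC f ≤ quantileRA ρ f α := by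
  refine le_csInf (quantileRA_set_nonempty f hα) fun z hz => ?_
  by_contra! hz_lt
  have hdisj : Disjoint {y | f y ≤ z} (C : Set Y) :=
    Set.disjoint_left.mpr fun y hyz hyC => (hz_lt.trans_le (C.inf'_le f hyC)).not_ge hyz
  exact (hcov.trans_le (add_le_add hz le_rfl)).not_ge
    (measure_add_measure_le_one_of_disjoint hdisj C.measurableSet)

end Quantile

theorem stmt_6_general {Y A : Type*} [Fintype Y] [Fintype A] [Nonempty A]
    [MeasurableSpace Y] [MeasurableSingletonClass Y]
    (u : A → Y → ℝ)
    (ρ : Measure Y) [IsProbabilityMeasure ρ]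
    (t : ℝ) (ht0 : 0 ≤ t)
    (C : Finset Y) (hC : C.Nonempty)
    (hcov : ENNReal.ofReal t < ρ ↑C) :
    Finset.univ.sup' Finset.univ_nonempty (fun a => C.inf' hC (u a)) ≤
      Finset.univ.sup' Finset.univ_nonempty (fun a => quantileRA ρ (u a) (1 - t)) := by
  have hcov' : 1 < ENNReal.ofReal (1 - t) + ρ C :=
    calc (1 : ENNReal) = ENNReal.ofReal ((1 - t) + t) := by simp
      _ ≤ ENNReal.ofReal (1 - t) + ENNReal.ofReal t := ENNReal.ofReal_add_le
      _ < ENNReal.ofReal (1 - t) + ρ C := ENNReal.add_lt_add_left ENNReal.ofReal_ne_top hcov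
  exact Finset.sup'_mono_fun fun a _ => inf'_le_quantileRA (u a) (by linarith) hC hcov'

/-- No prediction set whose conditional coverage exceeds `t` can have max-min
value larger than the best `(1-t)`-quantile utility `θ_ρ(t) = max_a quantile_{1-t}(u(a,·); ρ)`. -/
theorem stmt_6 {Y A : Type*} [Fintype Y] [Nonempty Y] [Fintype A] [Nonempty A]
    [MeasurableSpace Y] [MeasurableSingletonClass Y]
    (u : A → Y → ℝ)
    (ρ : Measure Y) [IsProbabilityMeasure ρ]
    (t : ℝ) (ht0 : 0 ≤ t) (ht1 : t < 1)
    (C : Finset Y) (hC : C.Nonempty)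
    (hcov : ENNReal.ofReal t < ρ ↑C) :
    Finset.univ.sup' Finset.univ_nonempty (fun a => C.inf' hC (u a)) ≤
      Finset.univ.sup' Finset.univ_nonempty (fun a => quantileRA ρ (u a) (1 - t)) :=
  stmt_6_general u ρ t ht0 C hC hcov
end

section
/- Let P and N be finite measures on ℝ concentrated on the interval (0,1] (i.e. P((0,1]ᶜ) = N((0,1]ᶜ) = 0), let θ₀ ∈ ℝ, and define θ : [0,1] → ℝ by θ(t) = θ₀ + P((0,t]) − N((0,t]), so θ(0) = θ₀. Suppose t* ∈ [0,1] satisfies θ(t*) ≥ θ(t) for all t ∈ [0,1]. Then: (i) for every antitone function ρ : ℝ → ℝ with 0 ≤ ρ(s) ≤ 1 for all s, one has ∫ ρ dP − ∫ ρ dN ≤ θ(t*) − θ₀; and (ii) the indicator function of (−∞, t*] attains equality: ∫ 1_{(−∞,t*]} dP − ∫ 1_{(−∞,t*]} dN = θ(t*) − θ₀. Consequently the supremum of ∫ ρ dP − ∫ ρ dN over all antitone ρ : ℝ → [0,1] equals θ(t*) − θ₀ and is attained by an indicator function. -/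
/-!
Since `P` and `N` live on `(0,1]`, `θ t - θ₀ = P(Iic t) - N(Iic t)` for every real `t`, and
clamping `t` into `[0,1]` shows that this is at most `M := θ t* - θ₀` everywhere. Every nonempty
lower set of `ℝ` is an increasing countable union of half-lines `Iic uₙ`, so continuity from below
gives `P S - N S ≤ M` for every lower set `S`. The superlevel sets `{ρ > t}` of an antitone `ρ` are
lower sets, and the layer-cake formula `∫ ρ dμ = ∫₀¹ μ {ρ > t} dt` turns this into (i). The
indicator of `Iic t*` is itself admissible and attains `M`.
-/

open MeasureTheory Filter Topology Set

theorem IsLowerSet.exists_monotone_iUnion_Iic {s : Set ℝ} (hs : IsLowerSet s) (hne : s.Nonempty) :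
    ∃ u : ℕ → ℝ, Monotone u ∧ ⋃ n, Iic (u n) = s := by
  by_cases hbdd : BddAbove s
  · by_cases hmem : sSup s ∈ s
    · refine ⟨fun _ => sSup s, monotone_const, ?_⟩
      rw [iUnion_const]
      exact Subset.antisymm (fun x hx => hs hx hmem) fun x hx => le_csSup hbdd hx
    obtain ⟨u, hu_mono, hu_lt, hu_lim, -⟩ :=
      (isLUB_csSup hne hbdd).exists_seq_strictMono_tendsto_of_notMem hmem hne
    refine ⟨u, hu_mono.monotone, ?_⟩
    rw [iUnion_Iic_eq_Iio_of_lt_of_tendsto hu_lt hu_lim]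
    refine Subset.antisymm (fun x hx => ?_) fun x hx => ?_
    · obtain ⟨y, hy, hxy⟩ := exists_lt_of_lt_csSup hne hx
      exact hs hxy.le hy
    · exact (le_csSup hbdd hx).lt_of_ne fun h => hmem (h ▸ hx)
  · refine ⟨fun n => n, Nat.mono_cast,
      (eq_univ_of_forall fun x => ?_).trans (eq_univ_of_forall fun x => ?_).symm⟩
    · exact mem_iUnion.2 (exists_nat_ge x)
    · obtain ⟨y, hy, hxy⟩ := not_bddAbove_iff.1 hbdd x
      exact hs hxy.le hy

theorem IsLowerSet.measureReal_sub_le {μ ν : Measure ℝ} [IsFiniteMeasure μ] [IsFiniteMeasure ν]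
    {M : ℝ} (hM : 0 ≤ M) (h : ∀ t, μ.real (Iic t) - ν.real (Iic t) ≤ M) {s : Set ℝ}
    (hs : IsLowerSet s) : μ.real s - ν.real s ≤ M := by
  rcases s.eq_empty_or_nonempty with rfl | hne
  · simpa using hM
  obtain ⟨u, hu, rfl⟩ := hs.exists_monotone_iUnion_Iic hne
  have hlim (κ : Measure ℝ) [IsFiniteMeasure κ] :
      Tendsto (fun n => κ.real (Iic (u n))) atTop (𝓝 (κ.real (⋃ n, Iic (u n)))) :=
    (ENNReal.tendsto_toReal (measure_ne_top κ _)).comp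
      (tendsto_measure_iUnion_atTop fun _ _ hmn => Iic_subset_Iic.2 (hu hmn))
  exact le_of_tendsto' ((hlim μ).sub (hlim ν)) fun n => h (u n)

theorem integral_eq_setIntegral_Ioc_measureReal_lt {α : Type*} [MeasurableSpace α]
    {μ : Measure α} [IsFiniteMeasure μ] {f : α → ℝ} (hf : Measurable f)
    (hf01 : ∀ a, f a ∈ Icc (0 : ℝ) 1) :
    ∫ a, f a ∂μ = ∫ t in Ioc (0 : ℝ) 1, μ.real {a | t < f a} := by
  have hint : Integrable f μ :=
    .of_bound hf.aestronglyMeasurable 1 (ae_of_all _ fun a => by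
      rw [Real.norm_eq_abs, abs_of_nonneg (hf01 a).1]; exact (hf01 a).2)
  rw [hint.integral_eq_integral_meas_lt (ae_of_all _ fun a => (hf01 a).1)]
  refine setIntegral_eq_of_subset_of_forall_sdiff_eq_zero measurableSet_Ioi Ioc_subset_Ioi_self
    fun t ht => ?_
  have hempty : {a | t < f a} = ∅ :=
    eq_empty_of_forall_notMem fun a ha => ht.2 ⟨ht.1, (ha.trans_le (hf01 a).2).le⟩
  simp [hempty]

theorem integral_sub_integral_le_of_measureReal_lt_sub_le {α : Type*} [MeasurableSpace α]
    {μ ν : Measure α} [IsFiniteMeasure μ] [IsFiniteMeasure ν] {f : α → ℝ} {M : ℝ}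
    (hf : Measurable f) (hf01 : ∀ a, f a ∈ Icc (0 : ℝ) 1)
    (h : ∀ t, μ.real {a | t < f a} - ν.real {a | t < f a} ≤ M) :
    ∫ a, f a ∂μ - ∫ a, f a ∂ν ≤ M := by
  have hint (κ : Measure α) [IsFiniteMeasure κ] :
      IntegrableOn (fun t => κ.real {a | t < f a}) (Ioc (0 : ℝ) 1) := by
    have hanti : Antitone fun t => κ.real {a | t < f a} := fun _ _ hst =>
      measureReal_mono fun _ ha => hst.trans_lt ha
    exact ((hanti.antitoneOn _).integrableOn_isCompact isCompact_Icc).mono_set Ioc_subset_Icc_self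
  calc ∫ a, f a ∂μ - ∫ a, f a ∂ν
      = ∫ t in Ioc (0 : ℝ) 1, (μ.real {a | t < f a} - ν.real {a | t < f a}) := by
        rw [integral_eq_setIntegral_Ioc_measureReal_lt hf hf01,
          integral_eq_setIntegral_Ioc_measureReal_lt hf hf01, integral_sub (hint μ) (hint ν)]
    _ ≤ ∫ _ in Ioc (0 : ℝ) 1, M :=
        setIntegral_mono_on ((hint μ).sub (hint ν)) (integrableOn_const (by simp))
          measurableSet_Ioc fun t _ => h t
    _ = M := by simp

theorem measure_Ioc_eq_measure_Iic {α : Type*} [LinearOrder α] [MeasurableSpace α]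
    {μ : Measure α} {a : α} (h : μ (Iic a) = 0) (t : α) : μ (Ioc a t) = μ (Iic t) := by
  rw [← Iic_sdiff_Iic, measure_sdiff_null h]

theorem measure_Iic_max_min {α : Type*} [LinearOrder α] [MeasurableSpace α] {μ : Measure α}
    {a b : α} (h : μ (Ioc a b)ᶜ = 0) (t : α) : μ (Iic (max a (min b t))) = μ (Iic t) := by
  rw [← measure_inter_conull (s := Iic (max a (min b t))) h, ← measure_inter_conull (s := Iic t) h]
  congr 1
  ext x
  simp only [mem_inter_iff, mem_Iic, mem_Ioc, le_max_iff, le_min_iff]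
  constructor
  · rintro ⟨hxa | ⟨-, hxt⟩, hax, hxb⟩
    · exact absurd hxa (not_le.2 hax)
    · exact ⟨hxt, hax, hxb⟩
  · rintro ⟨hxt, hax, hxb⟩
    exact ⟨Or.inr ⟨hxb, hxt⟩, hax, hxb⟩

theorem antitone_indicator_Iic {α β : Type*} [Preorder α] [Preorder β] [Zero β] {c : β}
    (hc : 0 ≤ c) (t : α) : Antitone ((Iic t).indicator fun _ => c) := by
  intro a b hab
  by_cases hb : b ∈ Iic t
  · rw [indicator_of_mem hb, indicator_of_mem (show a ∈ Iic t from hab.trans hb)]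
  · rw [indicator_of_notMem hb]
    exact indicator_nonneg (fun _ _ => hc) a

theorem stmt_8_general
    (P N : Measure ℝ) [IsFiniteMeasure P] [IsFiniteMeasure N]
    (hP : P ((Set.Ioc (0:ℝ) 1)ᶜ) = 0) (hN : N ((Set.Ioc (0:ℝ) 1)ᶜ) = 0)
    (θ₀ : ℝ) (θ : ℝ → ℝ)
    (hθ : ∀ t : ℝ, θ t = θ₀ + (P (Set.Ioc 0 t)).toReal - (N (Set.Ioc 0 t)).toReal)
    (tstar : ℝ)
    (hmax : ∀ t ∈ Set.Icc (0:ℝ) 1, θ t ≤ θ tstar) :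
    (∀ ρ : ℝ → ℝ, Antitone ρ → (∀ s, ρ s ∈ Set.Icc (0:ℝ) 1) →
      ∫ s, ρ s ∂P - ∫ s, ρ s ∂N ≤ θ tstar - θ₀) ∧
    (∫ s, Set.indicator (Set.Iic tstar) (fun _ => (1:ℝ)) s ∂P -
      ∫ s, Set.indicator (Set.Iic tstar) (fun _ => (1:ℝ)) s ∂N = θ tstar - θ₀) ∧
    sSup {v : ℝ | ∃ ρ : ℝ → ℝ, Antitone ρ ∧ (∀ s, ρ s ∈ Set.Icc (0:ℝ) 1) ∧
      v = ∫ s, ρ s ∂P - ∫ s, ρ s ∂N} = θ tstar - θ₀ := by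
  have hIic0 (κ : Measure ℝ) (hκ : κ (Ioc 0 1)ᶜ = 0) : κ (Iic 0) = 0 :=
    measure_mono_null (fun x (hx : x ∈ Iic 0) (h : x ∈ Ioc 0 1) => hx.not_gt h.1) hκ
  have hθIic (t : ℝ) : θ t - θ₀ = P.real (Iic t) - N.real (Iic t) := by
    rw [hθ, measure_Ioc_eq_measure_Iic (hIic0 P hP), measure_Ioc_eq_measure_Iic (hIic0 N hN),
      measureReal_def, measureReal_def]
    ring
  have hM0 : 0 ≤ θ tstar - θ₀ := by simpa [hθ] using hmax 0 ⟨le_rfl, zero_le_one⟩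
  have hbound (t : ℝ) : P.real (Iic t) - N.real (Iic t) ≤ θ tstar - θ₀ := by
    have h := sub_le_sub_right
      (hmax _ ⟨le_max_left 0 (min 1 t), max_le zero_le_one (min_le_left _ _)⟩) θ₀
    rwa [hθIic, measureReal_def, measureReal_def, measure_Iic_max_min hP,
      measure_Iic_max_min hN] at h
  have hantitone_le : ∀ ρ : ℝ → ℝ, Antitone ρ → (∀ s, ρ s ∈ Icc (0:ℝ) 1) →
      ∫ s, ρ s ∂P - ∫ s, ρ s ∂N ≤ θ tstar - θ₀ := fun ρ hρ hρ01 =>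
    integral_sub_integral_le_of_measureReal_lt_sub_le hρ.measurable hρ01 fun t =>
      IsLowerSet.measureReal_sub_le hM0 hbound fun _ _ hxy ht => ht.trans_le (hρ hxy)
  have hindicator : ∫ s, (Iic tstar).indicator (fun _ => (1:ℝ)) s ∂P -
      ∫ s, (Iic tstar).indicator (fun _ => (1:ℝ)) s ∂N = θ tstar - θ₀ := by
    simp [hθIic]
  refine ⟨hantitone_le, hindicator, IsGreatest.csSup_eq ⟨⟨_, antitone_indicator_Iic zero_le_one _,
    fun s => by by_cases hs : s ≤ tstar <;> simp [hs], hindicator.symm⟩, ?_⟩⟩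
  rintro v ⟨ρ, hρ, hρ01, rfl⟩
  exact hantitone_le ρ hρ hρ01

/-- Variational lemma: for `θ(t) = θ₀ + P((0,t]) − N((0,t])` with `P, N`
finite measures concentrated on `(0,1]`, and `t*` a maximizer of `θ` over `[0,1]`, every
antitone `ρ : ℝ → [0,1]` satisfies `∫ρ dP − ∫ρ dN ≤ θ(t*) − θ₀`, the indicator of
`(−∞, t*]` attains equality, and hence the supremum over all such `ρ` equals `θ(t*) − θ₀`. -/
theorem stmt_8
    (P N : Measure ℝ) [IsFiniteMeasure P] [IsFiniteMeasure N]
    (hP : P ((Set.Ioc (0:ℝ) 1)ᶜ) = 0) (hN : N ((Set.Ioc (0:ℝ) 1)ᶜ) = 0)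
    (θ₀ : ℝ) (θ : ℝ → ℝ)
    (hθ : ∀ t : ℝ, θ t = θ₀ + (P (Set.Ioc 0 t)).toReal - (N (Set.Ioc 0 t)).toReal)
    (tstar : ℝ) (htstar : tstar ∈ Set.Icc (0:ℝ) 1)
    (hmax : ∀ t ∈ Set.Icc (0:ℝ) 1, θ t ≤ θ tstar) :
    (∀ ρ : ℝ → ℝ, Antitone ρ → (∀ s, ρ s ∈ Set.Icc (0:ℝ) 1) →
      ∫ s, ρ s ∂P - ∫ s, ρ s ∂N ≤ θ tstar - θ₀) ∧
    (∫ s, Set.indicator (Set.Iic tstar) (fun _ => (1:ℝ)) s ∂P -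
      ∫ s, Set.indicator (Set.Iic tstar) (fun _ => (1:ℝ)) s ∂N = θ tstar - θ₀) ∧
    sSup {v : ℝ | ∃ ρ : ℝ → ℝ, Antitone ρ ∧ (∀ s, ρ s ∈ Set.Icc (0:ℝ) 1) ∧
      v = ∫ s, ρ s ∂P - ∫ s, ρ s ∂N} = θ tstar - θ₀ :=
  stmt_8_general P N hP hN θ₀ θ hθ tstar hmax
end

section
/- Let (𝒳, μ) be a probability space, α ∈ [0,1], β ≥ 0, and let θ : 𝒳 × ℝ → ℝ be jointly measurable and bounded. Suppose t* : 𝒳 → [0,1] is measurable with ∫ t* dμ = 1 − α and, for μ-almost every x, θ(x, s) + β s ≤ θ(x, t*(x)) + β t*(x) for all s ∈ [0,1]. Then for every measurable t : 𝒳 → [0,1] with ∫ t dμ ≥ 1 − α, one has ∫ θ(x, t(x)) dμ(x) ≤ ∫ θ(x, t*(x)) dμ(x). In words: if a coverage-assignment function pointwise maximizes the Lagrangian θ(x,s) + βs for some multiplier β ≥ 0 and exactly exhausts the coverage budget 1 − α, then it is optimal among all coverage assignments with total coverage at least 1 − α. -/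
open MeasureTheory

/-- If a coverage assignment `t*` pointwise (a.e.) maximizes the Lagrangian
`θ(x,s) + βs` over `s ∈ [0,1]` for some multiplier `β ≥ 0` and exactly exhausts the coverage
budget `1 − α`, then it is optimal among all measurable coverage assignments with total
coverage at least `1 − α`. -/
theorem stmt_9 {𝒳 : Type*} [MeasurableSpace 𝒳]
    (μ : Measure 𝒳) [IsProbabilityMeasure μ]
    (α : ℝ) (hα0 : 0 ≤ α) (hα1 : α ≤ 1)
    (β : ℝ) (hβ : 0 ≤ β)
    (θ : 𝒳 × ℝ → ℝ) (hθmeas : Measurable θ)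
    (M : ℝ) (hθbd : ∀ p : 𝒳 × ℝ, |θ p| ≤ M)
    (tstar : 𝒳 → ℝ) (htstar_meas : Measurable tstar)
    (htstar_mem : ∀ x, tstar x ∈ Set.Icc (0:ℝ) 1)
    (htstar_int : ∫ x, tstar x ∂μ = 1 - α)
    (hopt : ∀ᵐ x ∂μ, ∀ s ∈ Set.Icc (0:ℝ) 1,
      θ (x, s) + β * s ≤ θ (x, tstar x) + β * tstar x) :
    ∀ t : 𝒳 → ℝ, Measurable t → (∀ x, t x ∈ Set.Icc (0:ℝ) 1) →
      1 - α ≤ ∫ x, t x ∂μ →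
      ∫ x, θ (x, t x) ∂μ ≤ ∫ x, θ (x, tstar x) ∂μ := by
  intro t ht htmem htcov
  have hintθ : ∀ (u : 𝒳 → ℝ), Measurable u → (∀ x, u x ∈ Set.Icc (0:ℝ) 1) →
      Integrable (fun x => θ (x, u x)) μ := by
    intro u hu humem
    have hm : Measurable (fun x => θ (x, u x)) :=
      hθmeas.comp (measurable_id.prodMk hu)
    exact (integrable_const M).mono' hm.aestronglyMeasurable
      (Filter.Eventually.of_forall fun x => (Real.norm_eq_abs _).trans_le (hθbd _))
  have hintu : ∀ (u : 𝒳 → ℝ), Measurable u → (∀ x, u x ∈ Set.Icc (0:ℝ) 1) →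
      Integrable u μ := by
    intro u hu humem
    refine (integrable_const 1).mono' hu.aestronglyMeasurable
      (Filter.Eventually.of_forall fun x => ?_)
    have := humem x
    rw [Real.norm_eq_abs, abs_le]
    constructor <;> linarith [this.1, this.2]
  have hit := hintθ t ht htmem
  have hits := hintθ tstar htstar_meas htstar_mem
  have hIt := hintu t ht htmem
  have hIts := hintu tstar htstar_meas htstar_mem
  have key : ∫ x, (θ (x, t x) + β * t x) ∂μ ≤ ∫ x, (θ (x, tstar x) + β * tstar x) ∂μ := by
    refine integral_mono_ae (hit.add (hIt.const_mul β)) (hits.add (hIts.const_mul β)) ?_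
    filter_upwards [hopt] with x hx
    exact hx (t x) (htmem x)
  rw [integral_add hit (hIt.const_mul β), integral_add hits (hIts.const_mul β),
    integral_const_mul, integral_const_mul, htstar_int] at key
  nlinarith [htcov]
end

section
/- Let 𝒵 be a measurable space, n ∈ ℕ, α ∈ [0,1], and let Z = (Z₁, …, Z_{n+1}) be a random vector in 𝒵^{n+1} defined on a probability space (Ω, P) whose components are exchangeable: for every permutation σ of {1, …, n+1}, the vector (Z_{σ(1)}, …, Z_{σ(n+1)}) has the same law as Z. Let φ : 𝒵^{n+1} → {0,1}^{n+1} be measurable and permutation-equivariant: for every z ∈ 𝒵^{n+1} and every permutation σ, φ(z ∘ σ) = φ(z) ∘ σ (i.e. φ(z_{σ(1)}, …, z_{σ(n+1)})_i = φ(z)_{σ(i)} for all i). Suppose that for every z ∈ 𝒵^{n+1}, ∑_{i=1}^{n+1} φ(z)_i ≥ (1 − α)(n + 1). Then P(φ(Z)_{n+1} = 1) ≥ 1 − α. -/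
/-!
Exchangeability together with equivariance of `φ` makes every coordinate `φ(Z)ᵢ` have the
same law, so each is selected with the probability `p` of the last one. Taking expectations of
the number of selected coordinates, which is pointwise at least `(1 - α)(n + 1)`, gives
`(n + 1) p ≥ (1 - α)(n + 1)`.
-/

open MeasureTheory Finset

section

variable {ι 𝒵 β Ω : Type*} [MeasurableSpace 𝒵] [MeasurableSpace β] [MeasurableSpace Ω]

theorem map_equivariant_apply_eq_of_exchangeable [DecidableEq ι] (P : Measure Ω)
    {Z : Ω → ι → 𝒵} (hZ : Measurable Z)
    (hexch : ∀ σ : Equiv.Perm ι, P.map (fun ω i => Z ω (σ i)) = P.map Z)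
    {φ : (ι → 𝒵) → ι → β} (hφ : Measurable φ)
    (hequi : ∀ (z : ι → 𝒵) (σ : Equiv.Perm ι) (i : ι), φ (fun j => z (σ j)) i = φ z (σ i))
    (i j : ι) :
    P.map (fun ω => φ (Z ω) i) = P.map (fun ω => φ (Z ω) j) := by
  have hφi : Measurable fun z => φ z i := (measurable_pi_apply i).comp hφ
  have hZσ : Measurable fun ω k => Z ω (Equiv.swap i j k) :=
    measurable_pi_lambda _ fun k => (measurable_pi_apply _).comp hZ
  calc P.map (fun ω => φ (Z ω) i)
      = (P.map Z).map (fun z => φ z i) := (Measure.map_map hφi hZ).symm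
    _ = (P.map fun ω k => Z ω (Equiv.swap i j k)).map (fun z => φ z i) := by rw [hexch]
    _ = P.map (fun ω => φ (Z ω) j) := by
      rw [Measure.map_map hφi hZσ]
      congr 1
      ext ω
      simp [hequi]

theorem ofReal_le_sum_measure_of_le_card [Fintype ι] (P : Measure Ω) [IsProbabilityMeasure P]
    {A : ι → Set Ω} [∀ ω, DecidablePred fun i => ω ∈ A i] (hA : ∀ i, MeasurableSet (A i)) {c : ℝ}
    (hc : ∀ ω, c ≤ #{i | ω ∈ A i}) :
    ENNReal.ofReal c ≤ ∑ i, P (A i) := by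
  have hcount : ∀ ω, ∑ i, (A i).indicator 1 ω = (#{i | ω ∈ A i} : ENNReal) := fun ω => by
    simp only [Set.indicator_apply, Pi.one_apply, sum_boole]
  calc ENNReal.ofReal c
      = ∫⁻ _, ENNReal.ofReal c ∂P := by simp
    _ ≤ ∫⁻ ω, ∑ i, (A i).indicator 1 ω ∂P := lintegral_mono fun ω => by
      rw [hcount, ← ENNReal.ofReal_natCast]
      exact ENNReal.ofReal_le_ofReal (hc ω)
    _ = ∑ i, P (A i) := by
      rw [lintegral_finsetSum _ fun i _ => measurable_one.indicator (hA i)]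
      simp only [lintegral_indicator_one (hA _)]

end

theorem stmt_11_general {𝒵 Ω : Type*} [MeasurableSpace 𝒵] [MeasurableSpace Ω]
    (P : Measure Ω) [IsProbabilityMeasure P]
    (n : ℕ) (α : ℝ)
    (Z : Ω → Fin (n + 1) → 𝒵) (hZ : Measurable Z)
    (hexch : ∀ σ : Equiv.Perm (Fin (n + 1)),
      P.map (fun ω => fun i => Z ω (σ i)) = P.map Z)
    (φ : (Fin (n + 1) → 𝒵) → Fin (n + 1) → Bool) (hφ : Measurable φ)
    (hequi : ∀ (z : Fin (n + 1) → 𝒵) (σ : Equiv.Perm (Fin (n + 1))) (i : Fin (n + 1)),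
      φ (fun j => z (σ j)) i = φ z (σ i))
    (hsum : ∀ z : Fin (n + 1) → 𝒵,
      (1 - α) * (n + 1) ≤ ∑ i, (if φ z i = true then (1 : ℝ) else 0)) :
    ENNReal.ofReal (1 - α) ≤ P {ω | φ (Z ω) (Fin.last n) = true} := by
  have hcoord : ∀ i, Measurable fun ω => φ (Z ω) i := fun i => by fun_prop
  have hsel : ∀ i, MeasurableSet {ω | φ (Z ω) i = true} := fun i =>
    hcoord i (measurableSet_singleton true)
  have hsame : ∀ i, P {ω | φ (Z ω) i = true} = P {ω | φ (Z ω) (Fin.last n) = true} := by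
    intro i
    have hlaw := congrArg (· {true})
      (map_equivariant_apply_eq_of_exchangeable P hZ hexch hφ hequi i (Fin.last n))
    rwa [Measure.map_apply (hcoord _) (measurableSet_singleton true),
      Measure.map_apply (hcoord _) (measurableSet_singleton true)] at hlaw
  have hbound := ofReal_le_sum_measure_of_le_card P hsel (c := (1 - α) * (n + 1))
    fun ω => by simpa only [sum_boole, Set.mem_ofPred_eq] using hsum (Z ω)
  rw [sum_congr rfl fun i _ => hsame i, sum_const, card_univ, Fintype.card_fin, nsmul_eq_mul,
    ← Nat.cast_add_one, ENNReal.ofReal_mul' (Nat.cast_nonneg _), ENNReal.ofReal_natCast,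
    mul_comm _ ((n + 1 : ℕ) : ENNReal)] at hbound
  exact (ENNReal.mul_le_mul_iff_right (by simp) (by simp)).mp hbound

/-- Abstract distribution-free coverage guarantee for Risk Averse
Calibration: if `Z` is an exchangeable vector of `n+1` points and `φ` is a measurable,
permutation-equivariant selection rule whose selections always number at least
`(1−α)(n+1)`, then the last (test) point is selected with probability at least `1 − α`. -/
theorem stmt_11 {𝒵 Ω : Type*} [MeasurableSpace 𝒵] [MeasurableSpace Ω]
    (P : Measure Ω) [IsProbabilityMeasure P]
    (n : ℕ) (α : ℝ) (hα0 : 0 ≤ α) (hα1 : α ≤ 1)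
    (Z : Ω → Fin (n + 1) → 𝒵) (hZ : Measurable Z)
    (hexch : ∀ σ : Equiv.Perm (Fin (n + 1)),
      P.map (fun ω => fun i => Z ω (σ i)) = P.map Z)
    (φ : (Fin (n + 1) → 𝒵) → Fin (n + 1) → Bool) (hφ : Measurable φ)
    (hequi : ∀ (z : Fin (n + 1) → 𝒵) (σ : Equiv.Perm (Fin (n + 1))) (i : Fin (n + 1)),
      φ (fun j => z (σ j)) i = φ z (σ i))
    (hsum : ∀ z : Fin (n + 1) → 𝒵,
      (1 - α) * (n + 1) ≤ ∑ i, (if φ z i = true then (1 : ℝ) else 0)) :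
    ENNReal.ofReal (1 - α) ≤ P {ω | φ (Z ω) (Fin.last n) = true} :=
  stmt_11_general P n α Z hZ hexch φ hφ hequi hsum
end
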